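/- For all real x with 0 < x ≤ β/√2 (where β > 0), it holds J₁(x)/x ≤ I₁(√(β² - x²))/√(β² - x²). -/

import Mathlib

set_option maxHeartbeats 800000

open Real

/-- Bessel function of the first kind of order 1, via its power series. -/
noncomputable def besselJ1 (x : ℝ) : ℝ :=
  ∑' k : ℕ, (-1 : ℝ) ^ k * x ^ (1 + 2*k) /
    (2 ^ (1 + 2*k) * (k.factorial : ℝ) * ((k+1).factorial : ℝ))

/-- Modified Bessel function of the first kind of order 1, via its power series. -/
noncomputable def besselI1 (x : ℝ) : ℝ :=
  ∑' k : ℕ, x ^ (1 + 2*k) / (2 ^ (1 + 2*k) * (k.factorial : ℝ) * ((k+1).factorial : ℝ))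

private lemma cpos (k : ℕ) :
    (0:ℝ) < 2 ^ (1 + 2*k) * (k.factorial : ℝ) * ((k+1).factorial : ℝ) := by
  positivity

private lemma summable_aux (z : ℝ) :
    Summable (fun k : ℕ => z ^ (2*k) /
      (2 ^ (1 + 2*k) * (k.factorial : ℝ) * ((k+1).factorial : ℝ))) := by
  apply Summable.of_abs
  refine Summable.of_nonneg_of_le (fun k => abs_nonneg _) (fun k => ?_)
    (Real.summable_pow_div_factorial (z^2))
  rw [abs_div, abs_of_pos (cpos k)]
  have h1 : |z ^ (2*k)| = (z^2)^k := by
    rw [pow_mul, abs_pow, abs_of_nonneg (sq_nonneg z)]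
  rw [h1]
  have hfac : (1:ℝ) ≤ (k.factorial : ℝ) :=
    mod_cast Nat.one_le_iff_ne_zero.mpr (Nat.factorial_ne_zero _)
  have hfac2 : (1:ℝ) ≤ ((k+1).factorial : ℝ) :=
    mod_cast Nat.one_le_iff_ne_zero.mpr (Nat.factorial_ne_zero _)
  have hpow : (1:ℝ) ≤ 2 ^ (1 + 2*k) := one_le_pow₀ (by norm_num : (1:ℝ) ≤ 2)
  have hle : (k.factorial : ℝ) ≤
      2 ^ (1 + 2*k) * (k.factorial : ℝ) * ((k+1).factorial : ℝ) := by
    nlinarith [hfac, hfac2, hpow, mul_le_mul hpow hfac2 (by linarith) (by linarith : (0:ℝ) ≤ 2 ^ (1 + 2*k))]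
  exact div_le_div_of_nonneg_left (by positivity)
    (by exact_mod_cast Nat.cast_pos.mpr (Nat.factorial_pos k)) hle

theorem bessel_ratio_inequality (β x : ℝ) (hβ : 0 < β) (hx0 : 0 < x)
    (hx : x ≤ β / Real.sqrt 2) :
    besselJ1 x / x ≤ besselI1 (Real.sqrt (β^2 - x^2)) / Real.sqrt (β^2 - x^2) := by
  set y := Real.sqrt (β^2 - x^2) with hy
  have hs2 : Real.sqrt 2 ^ 2 = 2 := Real.sq_sqrt (by norm_num)
  have hs2pos : (0:ℝ) < Real.sqrt 2 := Real.sqrt_pos.mpr (by norm_num)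
  have hxb : x * Real.sqrt 2 ≤ β := by
    rw [div_eq_mul_inv] at hx
    calc x * Real.sqrt 2 ≤ (β * (Real.sqrt 2)⁻¹) * Real.sqrt 2 :=
          mul_le_mul_of_nonneg_right hx hs2pos.le
      _ = β := by field_simp
  have hsq : (x * Real.sqrt 2)^2 ≤ β^2 := pow_le_pow_left₀ (by positivity) hxb 2
  have h2 : x^2 ≤ β^2 - x^2 := by nlinarith [hsq, hs2]
  have hxy : x ≤ y := by
    rw [hy]
    exact (Real.le_sqrt hx0.le (by nlinarith)).mpr h2
  have hy0 : 0 < y := lt_of_lt_of_le hx0 hxy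
  have hJ : besselJ1 x / x = ∑' k : ℕ, (-1:ℝ)^k * x ^ (2*k) /
      (2 ^ (1 + 2*k) * (k.factorial : ℝ) * ((k+1).factorial : ℝ)) := by
    rw [besselJ1, ← tsum_div_const]
    congr 1; funext k
    rw [pow_add, pow_one]
    field_simp
  have hI : besselI1 y / y = ∑' k : ℕ, y ^ (2*k) /
      (2 ^ (1 + 2*k) * (k.factorial : ℝ) * ((k+1).factorial : ℝ)) := by
    rw [besselI1, ← tsum_div_const]
    congr 1; funext k
    rw [pow_add, pow_one]
    field_simp
  rw [hJ, hI]
  have hsJ : Summable (fun k : ℕ => (-1:ℝ)^k * x ^ (2*k) /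
      (2 ^ (1 + 2*k) * (k.factorial : ℝ) * ((k+1).factorial : ℝ))) := by
    apply Summable.of_abs
    have := (summable_aux x).abs
    refine this.congr fun k => ?_
    simp [abs_div, abs_mul, abs_pow]
  apply Summable.tsum_le_tsum _ hsJ (summable_aux y)
  intro k
  have hc := cpos k
  gcongr
  calc (-1:ℝ)^k * x ^ (2*k) ≤ 1 * x ^ (2*k) := by
        apply mul_le_mul_of_nonneg_right _ (by positivity)
        calc (-1:ℝ)^k ≤ |(-1:ℝ)^k| := le_abs_self _
          _ = 1 := by simp
    _ = x ^ (2*k) := one_mul _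
    _ ≤ y ^ (2*k) := pow_le_pow_left₀ hx0.le hxy _
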